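/- Let f : ℝ → ℝ be smooth with f'(y) > 0 for all y ∈ ℝ, and suppose there exist ε > 0 and δ > 0 such that f'(y) ≥ ε·|y|^{1+δ} for all y ≤ −1. Then the maximal solution y : [0,T) → ℝ of y'' = −f'(y) with y(0) = −1 and y'(0) = −1 satisfies T < ∞, lim_{t→T} y(t) = −∞, and sup_{t∈[0,T)} |f''(y(t))| = ∞. (Hence along the geodesic of M_f with x(t) = t, y-component y(t), the Ricci curvature ρ(γ̇,γ̇)(t) = f''(y(t)) is unbounded on the finite maximal interval [0,T), i.e., M_f Ricci explodes.) -/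

import Mathlib

open Filter Topology

/-- `y` (with derivative `y'`) solves the ODE `y'' = h(y)` on `[0,T)`. -/
def SolOnIco (h : ℝ → ℝ) (T : ℝ) (y y' : ℝ → ℝ) : Prop :=
  (∀ t ∈ Set.Ico (0:ℝ) T, HasDerivWithinAt y (y' t) (Set.Ico (0:ℝ) T) t) ∧
  (∀ t ∈ Set.Ico (0:ℝ) T, HasDerivWithinAt y' (h (y t)) (Set.Ico (0:ℝ) T) t)

/-- `y` (with derivative `y'`) solves the ODE `y'' = h(y)` on `[0,∞)`. -/
def SolOnIci (h : ℝ → ℝ) (y y' : ℝ → ℝ) : Prop :=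
  (∀ t ∈ Set.Ici (0:ℝ), HasDerivWithinAt y (y' t) (Set.Ici (0:ℝ)) t) ∧
  (∀ t ∈ Set.Ici (0:ℝ), HasDerivWithinAt y' (h (y t)) (Set.Ici (0:ℝ)) t)


open Set intervalIntegral

noncomputable def Wf (f : ℝ → ℝ) (u : ℝ) : ℝ := 1 + 2*(f (-1) - f u)
noncomputable def phif (f : ℝ → ℝ) (u : ℝ) : ℝ := (Real.sqrt (max (Wf f u) 2⁻¹))⁻¹
noncomputable def Mif (f : ℝ → ℝ) (u : ℝ) : ℝ := ∫ v in (-1:ℝ)..u, phif f v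

section
variable {f : ℝ → ℝ}

lemma fmono (hpos : ∀ u : ℝ, 0 < deriv f u) : StrictMono f := strictMono_of_deriv_pos hpos

lemma contW (hf : ContDiff ℝ (⊤ : ℕ∞) f) : Continuous (Wf f) := by
  have := hf.continuous
  unfold Wf; continuity

lemma maxWpos (u : ℝ) : (0:ℝ) < max (Wf f u) 2⁻¹ := lt_max_of_lt_right (by norm_num)

lemma phif_pos (u : ℝ) : 0 < phif f u := by
  unfold phif
  exact inv_pos.2 (Real.sqrt_pos.2 (maxWpos u))

lemma phif_cont (hf : ContDiff ℝ (⊤ : ℕ∞) f) : Continuous (phif f) := by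
  unfold phif
  apply Continuous.inv₀ (((contW hf).max continuous_const).sqrt)
  intro x
  have := maxWpos (f := f) x
  positivity

lemma phif_le (u : ℝ) : phif f u ≤ Real.sqrt 2 := by
  unfold phif
  rw [show Real.sqrt 2 = (Real.sqrt 2⁻¹)⁻¹ by rw [Real.sqrt_inv]; simp]
  apply inv_anti₀ (Real.sqrt_pos.2 (by norm_num))
  exact Real.sqrt_le_sqrt (le_max_right _ _)

lemma hasDerivAt_Mif (hf : ContDiff ℝ (⊤ : ℕ∞) f) (u : ℝ) : HasDerivAt (Mif f) (phif f u) u := by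
  apply intervalIntegral.integral_hasDerivAt_right
    ((phif_cont hf).intervalIntegrable _ _)
    ((phif_cont hf).stronglyMeasurableAtFilter _ _)
    (phif_cont hf).continuousAt

lemma Mif_strictMono (hf : ContDiff ℝ (⊤ : ℕ∞) f) : StrictMono (Mif f) :=
  strictMono_of_deriv_pos (fun u => by
    rw [(hasDerivAt_Mif hf u).deriv]; exact phif_pos u)

lemma Wf_ge_one (hpos : ∀ u : ℝ, 0 < deriv f u) {u : ℝ} (hu : u ≤ -1) : 1 ≤ Wf f u := by
  have : f u ≤ f (-1) := (fmono hpos).monotone hu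
  unfold Wf; nlinarith

lemma phif_eq (hpos : ∀ u : ℝ, 0 < deriv f u) {u : ℝ} (hu : u ≤ -1) :
    phif f u = (Real.sqrt (Wf f u))⁻¹ := by
  unfold phif
  rw [max_eq_left (le_trans (by norm_num) (Wf_ge_one hpos hu))]

lemma Mif_ge (hf : ContDiff ℝ (⊤ : ℕ∞) f) (hpos : ∀ u : ℝ, 0 < deriv f u) {u : ℝ} (hu : -1 ≤ u) :
    u + 1 ≤ Mif f u := by
  have h1 : ∀ v ∈ Icc (-1:ℝ) u, (1:ℝ) ≤ phif f v := by
    intro v hv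
    have hfv : f (-1) ≤ f v := (fmono hpos).monotone hv.1
    have h2 : max (Wf f v) 2⁻¹ ≤ 1 := by
      apply max_le _ (by norm_num)
      unfold Wf; nlinarith
    unfold phif
    rw [le_inv_comm₀ (by norm_num) (Real.sqrt_pos.2 (maxWpos v))]
    have := (Real.sqrt_le_sqrt h2).trans_eq Real.sqrt_one
    norm_num at this ⊢
    exact this
  calc u + 1 = ∫ v in (-1:ℝ)..u, (1:ℝ) := by simp
  _ ≤ Mif f u := intervalIntegral.integral_mono_on hu
        intervalIntegrable_const ((phif_cont hf).intervalIntegrable _ _) h1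

end
open Filter Topology Set intervalIntegral

section
variable {f : ℝ → ℝ} {ε δ : ℝ}

-- integral of the power lower bound
lemma pow_integral (hε : 0 < ε) (hδ : 0 < δ) {u : ℝ} (hu : u ≤ -1) :
    (∫ v in u..(-1:ℝ), ε * (-v) ^ (1+δ)) = ε/(2+δ) * ((-u)^(2+δ) - 1) := by
  have key : ∀ x ∈ uIcc u (-1:ℝ), HasDerivAt (fun v : ℝ => -(ε/(2+δ)) * (-v)^(2+δ))
      (ε * (-x) ^ (1+δ)) x := by
    intro x hx
    rw [uIcc_of_le hu] at hx
    have hxneg : (0:ℝ) < -x := by have := hx.2; linarith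
    have h1 : HasDerivAt (fun y : ℝ => y ^ (2+δ)) ((2+δ) * (-x)^(2+δ-1)) (-x) :=
      Real.hasDerivAt_rpow_const (Or.inl (ne_of_gt hxneg))
    have h2 : HasDerivAt (fun x : ℝ => -x) (-1) x := (hasDerivAt_id x).neg
    have h3 := (h1.comp x h2).const_mul (-(ε/(2+δ)))
    refine h3.congr_deriv (Eq.symm ?_)
    rw [show (2+δ-1) = 1+δ by ring]
    field_simp
  have hint : IntervalIntegrable (fun v : ℝ => ε * (-v) ^ (1+δ)) MeasureTheory.volume u (-1) := by
    apply ContinuousOn.intervalIntegrable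
    apply ContinuousOn.mul continuousOn_const
    apply ContinuousOn.rpow_const (continuousOn_id.neg)
    intro x hx
    rw [uIcc_of_le hu] at hx
    exact Or.inl (by intro h; have := hx.2; simp at h; linarith)
  rw [intervalIntegral.integral_eq_sub_of_hasDerivAt key hint]
  simp only [neg_neg]
  rw [Real.one_rpow]
  ring

lemma Wf_lower (hf : ContDiff ℝ (⊤ : ℕ∞) f) (hpos : ∀ u : ℝ, 0 < deriv f u)
    (hε : 0 < ε) (hδ : 0 < δ)
    (hsup : ∀ u : ℝ, u ≤ -1 → ε * |u| ^ (1 + δ) ≤ deriv f u)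
    {u : ℝ} (hu : u ≤ -1) :
    1 + 2*(ε/(2+δ)) * ((-u)^(2+δ) - 1) ≤ Wf f u := by
  have hdc : Continuous (deriv f) :=
    ((contDiff_infty_iff_deriv.mp (hf.of_le (by simp) : ContDiff ℝ (⊤:ℕ∞) f)).2).continuous
  have hftc : (∫ v in u..(-1:ℝ), deriv f v) = f (-1) - f u :=
    intervalIntegral.integral_deriv_eq_sub (fun x _ => (hf.differentiable (by simp)).differentiableAt)
      (hdc.intervalIntegrable _ _)
  have hmono : (∫ v in u..(-1:ℝ), ε * (-v) ^ (1+δ)) ≤ ∫ v in u..(-1:ℝ), deriv f v := by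
    apply intervalIntegral.integral_mono_on hu
    · apply ContinuousOn.intervalIntegrable
      apply ContinuousOn.mul continuousOn_const
      apply ContinuousOn.rpow_const (continuousOn_id.neg)
      intro x hx
      rw [uIcc_of_le hu] at hx
      exact Or.inl (by intro h; have := hx.2; simp at h; linarith)
    · exact hdc.intervalIntegrable _ _
    · intro x hx
      have hx2 := hx.2
      have := hsup x hx2
      rwa [abs_of_neg (by linarith : x < 0)] at this
  rw [pow_integral hε hδ hu] at hmono
  rw [hftc] at hmono
  unfold Wf
  nlinarith
end
section
variable {f : ℝ → ℝ} {ε δ : ℝ}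

lemma Wf_lower2 (hf : ContDiff ℝ (⊤ : ℕ∞) f) (hpos : ∀ u : ℝ, 0 < deriv f u)
    (hε : 0 < ε) (hδ : 0 < δ)
    (hsup : ∀ u : ℝ, u ≤ -1 → ε * |u| ^ (1 + δ) ≤ deriv f u)
    {u : ℝ} (hu : u ≤ -2) :
    ε/(2+δ) * (-u)^(2+δ) ≤ Wf f u := by
  have h1 := Wf_lower hf hpos hε hδ hsup (by linarith : u ≤ -1)
  have hx2 : (2:ℝ) ≤ (-u)^(2+δ) := by
    calc (2:ℝ) = (2:ℝ)^(1:ℝ) := (Real.rpow_one 2).symm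
    _ ≤ (2:ℝ)^(2+δ) := Real.rpow_le_rpow_of_exponent_le (by norm_num) (by linarith)
    _ ≤ (-u)^(2+δ) := Real.rpow_le_rpow (by norm_num) (by linarith) (by linarith)
  have hc : 0 < ε/(2+δ) := by positivity
  nlinarith

lemma phif_bound (hf : ContDiff ℝ (⊤ : ℕ∞) f) (hpos : ∀ u : ℝ, 0 < deriv f u)
    (hε : 0 < ε) (hδ : 0 < δ)
    (hsup : ∀ u : ℝ, u ≤ -1 → ε * |u| ^ (1 + δ) ≤ deriv f u)
    {v : ℝ} (hv : v ≤ -2) :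
    phif f v ≤ (Real.sqrt (ε/(2+δ)))⁻¹ * (-v)^(-(1+δ/2)) := by
  have hvpos : (0:ℝ) < -v := by linarith
  have hc : (0:ℝ) < ε/(2+δ) := by positivity
  have hW := Wf_lower2 hf hpos hε hδ hsup hv
  have hWmax : ε/(2+δ) * (-v)^(2+δ) ≤ max (Wf f v) 2⁻¹ := le_trans hW (le_max_left _ _)
  have hsq : Real.sqrt (ε/(2+δ) * (-v)^(2+δ)) = Real.sqrt (ε/(2+δ)) * (-v)^((2+δ)/2) := by
    have hconv : Real.sqrt ((-v)^(2+δ)) = (-v)^((2+δ)/2) := by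
      rw [Real.sqrt_eq_rpow, ← Real.rpow_mul hvpos.le]
      congr 1; ring
    rw [Real.sqrt_mul hc.le, hconv]
  have hprodpos : (0:ℝ) < ε/(2+δ) * (-v)^(2+δ) := by positivity
  unfold phif
  calc (Real.sqrt (max (Wf f v) 2⁻¹))⁻¹
      ≤ (Real.sqrt (ε/(2+δ) * (-v)^(2+δ)))⁻¹ := by
        apply inv_anti₀ (Real.sqrt_pos.2 hprodpos) (Real.sqrt_le_sqrt hWmax)
  _ = (Real.sqrt (ε/(2+δ)))⁻¹ * (-v)^(-(1+δ/2)) := by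
        rw [hsq, mul_inv, ← Real.rpow_neg hvpos.le]
        congr 1
        ring

lemma powint_bound (hδ : 0 < δ) {u : ℝ} (hu : u ≤ -2) :
    (∫ v in u..(-2:ℝ), (-v)^(-(1+δ/2))) ≤ 2/δ := by
  have key : ∀ x ∈ uIcc u (-2:ℝ), HasDerivAt (fun v : ℝ => (2/δ) * (-v)^(-(δ/2)))
      ((-x) ^ (-(1+δ/2))) x := by
    intro x hx
    rw [uIcc_of_le hu] at hx
    have hxneg : (0:ℝ) < -x := by have := hx.2; linarith
    have h1 : HasDerivAt (fun y : ℝ => y ^ (-(δ/2))) ((-(δ/2)) * (-x)^(-(δ/2)-1)) (-x) :=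
      Real.hasDerivAt_rpow_const (Or.inl (ne_of_gt hxneg))
    have h2 : HasDerivAt (fun x : ℝ => -x) (-1) x := (hasDerivAt_id x).neg
    have h3 := (h1.comp x h2).const_mul (2/δ)
    refine h3.congr_deriv (Eq.symm ?_)
    rw [show -(δ/2)-1 = -(1+δ/2) by ring]
    field_simp
  have hint : IntervalIntegrable (fun v : ℝ => (-v)^(-(1+δ/2))) MeasureTheory.volume u (-2) := by
    apply ContinuousOn.intervalIntegrable
    apply ContinuousOn.rpow_const (continuousOn_id.neg)
    intro x hx
    rw [uIcc_of_le hu] at hx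
    exact Or.inl (by intro h; have := hx.2; simp at h; linarith)
  rw [intervalIntegral.integral_eq_sub_of_hasDerivAt key hint]
  have h2le : ((2:ℝ))^(-(δ/2)) ≤ 1 :=
    Real.rpow_le_one_of_one_le_of_nonpos (by norm_num) (by linarith)
  have hupos : (0:ℝ) ≤ (-u)^(-(δ/2)) := Real.rpow_nonneg (by linarith) _
  have hd : (0:ℝ) < 2/δ := by positivity
  simp only [neg_neg]
  calc 2/δ * (2:ℝ)^(-(δ/2)) - 2/δ * (-u)^(-(δ/2)) ≤ 2/δ * 1 - 0 := by nlinarith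
  _ = 2/δ := by ring

lemma Mif_bdd (hf : ContDiff ℝ (⊤ : ℕ∞) f) (hpos : ∀ u : ℝ, 0 < deriv f u)
    (hε : 0 < ε) (hδ : 0 < δ)
    (hsup : ∀ u : ℝ, u ≤ -1 → ε * |u| ^ (1 + δ) ≤ deriv f u)
    {u : ℝ} (hu : u ≤ -1) :
    -(Mif f u) ≤ Real.sqrt 2 + (Real.sqrt (ε/(2+δ)))⁻¹ * (2/δ) := by
  have hφint : ∀ a b : ℝ, IntervalIntegrable (phif f) MeasureTheory.volume a b :=
    fun a b => (phif_cont hf).intervalIntegrable a b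
  have hMeq : -(Mif f u) = ∫ v in u..(-1:ℝ), phif f v := by
    unfold Mif; rw [intervalIntegral.integral_symm]; simp
  have hconst : ∀ a b : ℝ, a ≤ b → b ≤ -1 → (∫ v in a..b, phif f v) ≤ Real.sqrt 2 * (b - a) := by
    intro a b hab _
    calc (∫ v in a..b, phif f v) ≤ ∫ v in a..b, Real.sqrt 2 :=
        intervalIntegral.integral_mono_on hab (hφint a b) intervalIntegrable_const
          (fun x _ => phif_le x)
    _ = Real.sqrt 2 * (b - a) := by rw [intervalIntegral.integral_const]; simp [mul_comm]
  have hC2 : (0:ℝ) ≤ (Real.sqrt (ε/(2+δ)))⁻¹ * (2/δ) := by positivity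
  rw [hMeq]
  rcases le_or_gt (-2) u with h2 | h2
  · calc (∫ v in u..(-1:ℝ), phif f v) ≤ Real.sqrt 2 * ((-1) - u) := hconst u (-1) hu le_rfl
    _ ≤ Real.sqrt 2 + (Real.sqrt (ε/(2+δ)))⁻¹ * (2/δ) := by
        nlinarith [Real.sqrt_nonneg 2]
  · have hsplit : (∫ v in u..(-2:ℝ), phif f v) + (∫ v in (-2:ℝ)..(-1:ℝ), phif f v)
        = ∫ v in u..(-1:ℝ), phif f v :=
      intervalIntegral.integral_add_adjacent_intervals (hφint _ _) (hφint _ _)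
    rw [← hsplit]
    have hA : (∫ v in u..(-2:ℝ), phif f v) ≤ (Real.sqrt (ε/(2+δ)))⁻¹ * (2/δ) := by
      have hmono : (∫ v in u..(-2:ℝ), phif f v)
          ≤ ∫ v in u..(-2:ℝ), (Real.sqrt (ε/(2+δ)))⁻¹ * (-v)^(-(1+δ/2)) := by
        apply intervalIntegral.integral_mono_on (by linarith) (hφint _ _)
        · apply ContinuousOn.intervalIntegrable
          apply ContinuousOn.mul continuousOn_const
          apply ContinuousOn.rpow_const (continuousOn_id.neg)
          intro x hx
          rw [uIcc_of_le (by linarith : u ≤ -2)] at hx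
          exact Or.inl (by intro h; have := hx.2; simp at h; linarith)
        · exact fun x hx => phif_bound hf hpos hε hδ hsup hx.2
      rw [intervalIntegral.integral_const_mul] at hmono
      calc (∫ v in u..(-2:ℝ), phif f v)
          ≤ (Real.sqrt (ε/(2+δ)))⁻¹ * ∫ v in u..(-2:ℝ), (-v)^(-(1+δ/2)) := hmono
      _ ≤ (Real.sqrt (ε/(2+δ)))⁻¹ * (2/δ) := by
          apply mul_le_mul_of_nonneg_left (powint_bound hδ (by linarith)) (by positivity)
    have hB : (∫ v in (-2:ℝ)..(-1:ℝ), phif f v) ≤ Real.sqrt 2 := by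
      calc (∫ v in (-2:ℝ)..(-1:ℝ), phif f v) ≤ Real.sqrt 2 * ((-1) - (-2)) :=
        hconst (-2) (-1) (by norm_num) le_rfl
      _ = Real.sqrt 2 := by ring_nf
    linarith
end
noncomputable def Bf (f : ℝ → ℝ) : ℝ := sSup ((fun u => -(Mif f u)) '' Set.Iic (-1))
noncomputable def yhat (f : ℝ → ℝ) (t : ℝ) : ℝ := Function.invFun (Mif f) (-t)

section
variable {f : ℝ → ℝ} {ε δ : ℝ}

lemma Mif_neg1 : Mif f (-1) = 0 := by unfold Mif; simp

lemma Mif_cont (hf : ContDiff ℝ (⊤ : ℕ∞) f) : Continuous (Mif f) :=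
  continuous_iff_continuousAt.2 fun u => (hasDerivAt_Mif hf u).continuousAt

lemma Bf_nonempty : ((fun u => -(Mif f u)) '' Set.Iic (-1)).Nonempty :=
  ⟨-(Mif f (-1)), ⟨-1, Set.mem_Iic.2 le_rfl, rfl⟩⟩

lemma Bf_bdd (hf : ContDiff ℝ (⊤ : ℕ∞) f) (hpos : ∀ u : ℝ, 0 < deriv f u)
    (hε : 0 < ε) (hδ : 0 < δ)
    (hsup : ∀ u : ℝ, u ≤ -1 → ε * |u| ^ (1 + δ) ≤ deriv f u) :
    BddAbove ((fun u => -(Mif f u)) '' Set.Iic (-1)) := by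
  refine ⟨Real.sqrt 2 + (Real.sqrt (ε/(2+δ)))⁻¹ * (2/δ), ?_⟩
  rintro x ⟨u, hu, rfl⟩
  exact Mif_bdd hf hpos hε hδ hsup hu

lemma Bf_lt (hf : ContDiff ℝ (⊤ : ℕ∞) f) (hpos : ∀ u : ℝ, 0 < deriv f u)
    (hε : 0 < ε) (hδ : 0 < δ)
    (hsup : ∀ u : ℝ, u ≤ -1 → ε * |u| ^ (1 + δ) ≤ deriv f u)
    {u : ℝ} (hu : u ≤ -1) : -(Mif f u) < Bf f := by
  have h1 : -(Mif f (u-1)) ≤ Bf f :=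
    le_csSup (Bf_bdd hf hpos hε hδ hsup) ⟨u-1, Set.mem_Iic.2 (by linarith), rfl⟩
  have h2 : Mif f (u-1) < Mif f u := Mif_strictMono hf (by linarith)
  linarith

lemma Bf_pos (hf : ContDiff ℝ (⊤ : ℕ∞) f) (hpos : ∀ u : ℝ, 0 < deriv f u)
    (hε : 0 < ε) (hδ : 0 < δ)
    (hsup : ∀ u : ℝ, u ≤ -1 → ε * |u| ^ (1 + δ) ≤ deriv f u) : 0 < Bf f := by
  have := Bf_lt hf hpos hε hδ hsup (le_refl (-1))
  rwa [Mif_neg1, neg_zero] at this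

lemma exists_Mif_eq (hf : ContDiff ℝ (⊤ : ℕ∞) f) {a b s : ℝ} (hab : a ≤ b)
    (h1 : Mif f a ≤ s) (h2 : s ≤ Mif f b) : ∃ u, Mif f u = s := by
  obtain ⟨u, _, hu⟩ := intermediate_value_Icc hab (Mif_cont hf).continuousOn ⟨h1, h2⟩
  exact ⟨u, hu⟩

lemma Mif_surj (hf : ContDiff ℝ (⊤ : ℕ∞) f) (hpos : ∀ u : ℝ, 0 < deriv f u)
    (hε : 0 < ε) (hδ : 0 < δ)
    (hsup : ∀ u : ℝ, u ≤ -1 → ε * |u| ^ (1 + δ) ≤ deriv f u)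
    {s : ℝ} (hs : -Bf f < s) : ∃ u, Mif f u = s := by
  obtain ⟨a, ha⟩ : ∃ a, Mif f a < s := by
    rcases lt_or_ge 0 s with h | h
    · exact ⟨-1, by rw [Mif_neg1]; exact h⟩
    · have hlt : -s < sSup ((fun u => -(Mif f u)) '' Set.Iic (-1)) := by
        unfold Bf at hs; linarith
      obtain ⟨w, ⟨u₀, _, rfl⟩, hw⟩ := exists_lt_of_lt_csSup Bf_nonempty hlt
      have hw' : -s < -(Mif f u₀) := hw
      exact ⟨u₀, by linarith⟩
  have hb : s < Mif f (max s 0) := by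
    have h1 : max s 0 + 1 ≤ Mif f (max s 0) :=
      Mif_ge hf hpos (le_trans (by norm_num) (le_max_right s 0))
    have h2 : s ≤ max s 0 := le_max_left s 0
    linarith
  exact exists_Mif_eq hf (le_of_lt ((Mif_strictMono hf).lt_iff_lt.mp (lt_trans ha hb)))
    ha.le hb.le

lemma invFun_Mif_self (hf : ContDiff ℝ (⊤ : ℕ∞) f) (u : ℝ) :
    Function.invFun (Mif f) (Mif f u) = u :=
  Function.leftInverse_invFun (Mif_strictMono hf).injective u

lemma invFun_Mif_cont (hf : ContDiff ℝ (⊤ : ℕ∞) f) (u₀ : ℝ) :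
    ContinuousAt (Function.invFun (Mif f)) (Mif f u₀) := by
  rw [Metric.continuousAt_iff]
  intro e he
  set e' := min (e/2) 1 with he'
  have he'pos : 0 < e' := by positivity
  refine ⟨min (Mif f u₀ - Mif f (u₀ - e')) (Mif f (u₀ + e') - Mif f u₀), ?_, ?_⟩
  · apply lt_min <;> · simp only [sub_pos]; exact Mif_strictMono hf (by linarith)
  · intro s hs
    rw [Real.dist_eq] at hs
    have hlow : Mif f (u₀ - e') < s := by
      have := abs_lt.1 hs
      have h2 := min_le_left (Mif f u₀ - Mif f (u₀ - e')) (Mif f (u₀ + e') - Mif f u₀)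
      linarith [this.1]
    have hhigh : s < Mif f (u₀ + e') := by
      have := abs_lt.1 hs
      have h2 := min_le_right (Mif f u₀ - Mif f (u₀ - e')) (Mif f (u₀ + e') - Mif f u₀)
      linarith [this.2]
    obtain ⟨u, hu1, hu2⟩ := intermediate_value_Icc (by linarith : u₀ - e' ≤ u₀ + e')
      (Mif_cont hf).continuousOn ⟨hlow.le, hhigh.le⟩
    rw [Real.dist_eq, ← hu2, invFun_Mif_self hf, invFun_Mif_self hf]
    rw [abs_lt]
    constructor
    · have := hu1.1; have : e' ≤ e/2 := min_le_left _ _; nlinarith [hu1.1, min_le_left (e/2) (1:ℝ)]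
    · have : e' ≤ e/2 := min_le_left _ _; nlinarith [hu1.2]

lemma invFun_Mif_deriv (hf : ContDiff ℝ (⊤ : ℕ∞) f) (u₀ : ℝ) :
    HasDerivAt (Function.invFun (Mif f)) ((phif f u₀)⁻¹) (Mif f u₀) := by
  apply HasDerivAt.of_local_left_inverse (invFun_Mif_cont hf u₀)
    (g := Function.invFun (Mif f))
  · rw [invFun_Mif_self hf]; exact hasDerivAt_Mif hf u₀
  · exact ne_of_gt (phif_pos u₀)
  · have hmem : Mif f u₀ ∈ Set.Ioo (Mif f (u₀ - 1)) (Mif f (u₀ + 1)) :=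
      ⟨Mif_strictMono hf (by linarith), Mif_strictMono hf (by linarith)⟩
    filter_upwards [isOpen_Ioo.mem_nhds hmem] with s hs
    obtain ⟨u, hu⟩ := exists_Mif_eq hf (by linarith : u₀ - 1 ≤ u₀ + 1) hs.1.le hs.2.le
    rw [← hu, invFun_Mif_self hf]

end
section
variable {f : ℝ → ℝ} {ε δ : ℝ}

lemma yhat_spec (hf : ContDiff ℝ (⊤ : ℕ∞) f) (hpos : ∀ u : ℝ, 0 < deriv f u)
    (hε : 0 < ε) (hδ : 0 < δ)
    (hsup : ∀ u : ℝ, u ≤ -1 → ε * |u| ^ (1 + δ) ≤ deriv f u)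
    {t : ℝ} (ht : t < Bf f) : Mif f (yhat f t) = -t :=
  Function.invFun_eq (Mif_surj hf hpos hε hδ hsup (by linarith))

lemma yhat_le (hf : ContDiff ℝ (⊤ : ℕ∞) f) (hpos : ∀ u : ℝ, 0 < deriv f u)
    (hε : 0 < ε) (hδ : 0 < δ)
    (hsup : ∀ u : ℝ, u ≤ -1 → ε * |u| ^ (1 + δ) ≤ deriv f u)
    {t : ℝ} (ht0 : 0 ≤ t) (ht : t < Bf f) : yhat f t ≤ -1 := by
  have h := yhat_spec hf hpos hε hδ hsup ht
  have h2 : Mif f (yhat f t) ≤ Mif f (-1) := by rw [h, Mif_neg1]; linarith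
  exact (Mif_strictMono hf).le_iff_le.mp h2

lemma yhat_hasDeriv (hf : ContDiff ℝ (⊤ : ℕ∞) f) (hpos : ∀ u : ℝ, 0 < deriv f u)
    (hε : 0 < ε) (hδ : 0 < δ)
    (hsup : ∀ u : ℝ, u ≤ -1 → ε * |u| ^ (1 + δ) ≤ deriv f u)
    {t : ℝ} (ht : t < Bf f) :
    HasDerivAt (yhat f) (-(phif f (yhat f t))⁻¹) t := by
  have hspec := yhat_spec hf hpos hε hδ hsup ht
  have h1 : HasDerivAt (Function.invFun (Mif f)) ((phif f (yhat f t))⁻¹) (-t) := by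
    have := invFun_Mif_deriv hf (yhat f t); rwa [hspec] at this
  have h2 : HasDerivAt (fun s : ℝ => -s) (-1) t := (hasDerivAt_id t).neg
  have h3 := h1.comp t h2
  have heq : yhat f = (Function.invFun (Mif f)) ∘ (fun s : ℝ => -s) := rfl
  rw [heq]
  refine h3.congr_deriv (Eq.symm ?_)
  rw [← heq]; ring

lemma yhat_deriv1 (hf : ContDiff ℝ (⊤ : ℕ∞) f) (hpos : ∀ u : ℝ, 0 < deriv f u)
    (hε : 0 < ε) (hδ : 0 < δ)
    (hsup : ∀ u : ℝ, u ≤ -1 → ε * |u| ^ (1 + δ) ≤ deriv f u)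
    {t : ℝ} (ht0 : 0 ≤ t) (ht : t < Bf f) :
    HasDerivAt (yhat f) (-Real.sqrt (Wf f (yhat f t))) t := by
  have h := yhat_hasDeriv hf hpos hε hδ hsup ht
  rwa [phif_eq hpos (yhat_le hf hpos hε hδ hsup ht0 ht), inv_inv] at h

lemma sqrtW_hasDeriv (hf : ContDiff ℝ (⊤ : ℕ∞) f) (hpos : ∀ u : ℝ, 0 < deriv f u)
    {x : ℝ} (hx : x ≤ -1) :
    HasDerivAt (fun u => -Real.sqrt (Wf f u)) (deriv f x / Real.sqrt (Wf f x)) x := by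
  have hW1 : 1 ≤ Wf f x := Wf_ge_one hpos hx
  have hd : HasDerivAt f (deriv f x) x := ((hf.differentiable (by simp)) x).hasDerivAt
  have hWd : HasDerivAt (Wf f) (2*(0 - deriv f x)) x :=
    (((hasDerivAt_const x (f (-1))).sub hd).const_mul 2).const_add 1
  have hsq := (Real.hasDerivAt_sqrt (by linarith : Wf f x ≠ 0)).comp x hWd
  have h2 := hsq.neg
  have hsne : Real.sqrt (Wf f x) ≠ 0 := ne_of_gt (Real.sqrt_pos.2 (by linarith))
  refine h2.congr_deriv (Eq.symm ?_)
  show deriv f x / Real.sqrt (Wf f x) = -(1 / (2 * Real.sqrt (Wf f x)) * (2*(0 - deriv f x)))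
  field_simp
  ring

lemma yhat_deriv2 (hf : ContDiff ℝ (⊤ : ℕ∞) f) (hpos : ∀ u : ℝ, 0 < deriv f u)
    (hε : 0 < ε) (hδ : 0 < δ)
    (hsup : ∀ u : ℝ, u ≤ -1 → ε * |u| ^ (1 + δ) ≤ deriv f u)
    {t : ℝ} (ht0 : 0 ≤ t) (ht : t < Bf f) :
    HasDerivAt (fun s => -Real.sqrt (Wf f (yhat f s))) (-(deriv f (yhat f t))) t := by
  have hle := yhat_le hf hpos hε hδ hsup ht0 ht
  have h1 := sqrtW_hasDeriv hf hpos hle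
  have h2 := yhat_deriv1 hf hpos hε hδ hsup ht0 ht
  have h3 := h1.comp t h2
  have hW1 : 1 ≤ Wf f (yhat f t) := Wf_ge_one hpos hle
  have hsne : Real.sqrt (Wf f (yhat f t)) ≠ 0 := ne_of_gt (Real.sqrt_pos.2 (by linarith))
  refine h3.congr_deriv (Eq.symm ?_)
  show -(deriv f (yhat f t))
      = deriv f (yhat f t) / Real.sqrt (Wf f (yhat f t)) * (-Real.sqrt (Wf f (yhat f t)))
  field_simp

lemma f2nd_unbdd (hf : ContDiff ℝ (⊤ : ℕ∞) f) (hpos : ∀ u : ℝ, 0 < deriv f u)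
    (hε : 0 < ε) (hδ : 0 < δ)
    (hsup : ∀ u : ℝ, u ≤ -1 → ε * |u| ^ (1 + δ) ≤ deriv f u)
    (M : ℝ) : ∃ u : ℝ, u ≤ -1 ∧ M < |deriv (deriv f) u| := by
  by_contra h
  push_neg at h
  have hM0 : 0 ≤ M := le_trans (abs_nonneg _) (h (-1) le_rfl)
  have hf' : ContDiff ℝ (⊤:ℕ∞) (deriv f) :=
    (contDiff_infty_iff_deriv.mp (hf.of_le (by simp) : ContDiff ℝ (⊤:ℕ∞) f)).2
  have hf'' : Continuous (deriv (deriv f)) := (contDiff_infty_iff_deriv.mp hf').2.continuous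
  set K := (deriv f (-1) + M)/ε with hK
  have hKpos : 0 < K := by have := hpos (-1); positivity
  set r := max 1 ((K+1) ^ (δ⁻¹)) with hr
  have hr1 : (1:ℝ) ≤ r := le_max_left _ _
  have hrpos : (0:ℝ) < r := by linarith
  have hu : -r ≤ -1 := by linarith
  -- FTC bound for deriv f
  have hftc : (∫ v in (-r)..(-1:ℝ), deriv (deriv f) v) = deriv f (-1) - deriv f (-r) :=
    intervalIntegral.integral_deriv_eq_sub
      (fun x _ => (hf'.differentiable (by simp)).differentiableAt)
      (hf''.intervalIntegrable _ _)
  have hbnd : |deriv f (-1) - deriv f (-r)| ≤ M * |(-1:ℝ) - (-r)| := by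
    rw [← hftc, ← Real.norm_eq_abs]
    apply intervalIntegral.norm_integral_le_of_norm_le_const
    intro x hx
    rw [Set.uIoc_of_le hu] at hx
    rw [Real.norm_eq_abs]
    exact h x hx.2
  have habs : |(-1:ℝ) - (-r)| = r - 1 := by rw [abs_of_nonneg (by linarith)]; ring
  rw [habs] at hbnd
  have hderiv_le : deriv f (-r) ≤ deriv f (-1) + M * r := by
    have := abs_le.1 hbnd
    nlinarith [this.1, this.2]
  have hsup' := hsup (-r) hu
  rw [abs_of_neg (by linarith : (-r:ℝ) < 0), neg_neg] at hsup'
  have hrd : r ^ (1+δ) = r * r ^ δ := by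
    rw [Real.rpow_add hrpos, Real.rpow_one]
  have hKbound : r ^ δ ≤ K := by
    have h1 : ε * (r * r ^ δ) ≤ deriv f (-1) + M * r := by rw [← hrd]; linarith
    have h2 : deriv f (-1) + M * r ≤ (deriv f (-1) + M) * r := by nlinarith [hpos (-1)]
    have h3 : ε * r * r ^ δ ≤ (deriv f (-1) + M) * r := by nlinarith
    have h4 : ε * r ^ δ ≤ deriv f (-1) + M := by
      nlinarith [Real.rpow_nonneg hrpos.le δ]
    rw [le_div_iff₀ hε]
    linarith
  have hrK : K + 1 ≤ r ^ δ := by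
    have h1 : ((K+1) ^ (δ⁻¹)) ^ δ ≤ r ^ δ :=
      Real.rpow_le_rpow (Real.rpow_nonneg (by linarith) _) (le_max_right _ _) hδ.le
    calc K + 1 = ((K+1) ^ (δ⁻¹)) ^ δ := by
          rw [← Real.rpow_mul (by linarith : (0:ℝ) ≤ K+1), inv_mul_cancel₀ (ne_of_gt hδ),
            Real.rpow_one]
    _ ≤ r ^ δ := h1
  linarith
end
section
variable {f : ℝ → ℝ} {ε δ : ℝ}

lemma sol_facts (hf : ContDiff ℝ (⊤ : ℕ∞) f) (hpos : ∀ u : ℝ, 0 < deriv f u)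
    {T : ℝ} (hT : 0 < T) {y y' : ℝ → ℝ}
    (hsol : SolOnIco (fun u => -deriv f u) T y y') (hy0 : y 0 = -1) (hy'0 : y' 0 = -1) :
    ∀ t ∈ Set.Ico (0:ℝ) T, y t ≤ -1 ∧ Mif f (y t) = -t := by
  obtain ⟨hdy, hdy'⟩ := hsol
  have h0mem : (0:ℝ) ∈ Set.Ico (0:ℝ) T := ⟨le_rfl, hT⟩
  have hconv : Convex ℝ (Set.Ico (0:ℝ) T) := convex_Ico 0 T
  have hcy : ContinuousOn y (Set.Ico (0:ℝ) T) := fun t htm => (hdy t htm).continuousWithinAt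
  have hcy' : ContinuousOn y' (Set.Ico (0:ℝ) T) := fun t htm => (hdy' t htm).continuousWithinAt
  have hinter : interior (Set.Ico (0:ℝ) T) = Set.Ioo 0 T := interior_Ico
  have hnhds : ∀ x ∈ Set.Ioo (0:ℝ) T, Set.Ico (0:ℝ) T ∈ 𝓝 x := fun x hx =>
    mem_nhds_iff.2 ⟨Set.Ioo 0 T, Set.Ioo_subset_Ico_self, isOpen_Ioo, hx⟩
  -- y' is antitone
  have hanti' : AntitoneOn y' (Set.Ico (0:ℝ) T) := by
    apply antitoneOn_of_hasDerivWithinAt_nonpos hconv hcy'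
      (f' := fun x => -(deriv f (y x)))
    · intro x hx
      rw [hinter] at hx ⊢
      exact ((hdy' x (Set.Ioo_subset_Ico_self hx)).hasDerivAt (hnhds x hx)).hasDerivWithinAt
    · intro x hx
      have := hpos (y x); linarith
  have hy'le : ∀ t ∈ Set.Ico (0:ℝ) T, y' t ≤ -1 := by
    intro t htm
    have := hanti' h0mem htm htm.1
    rwa [hy'0] at this
  -- y is antitone
  have hanti : AntitoneOn y (Set.Ico (0:ℝ) T) := by
    apply antitoneOn_of_hasDerivWithinAt_nonpos hconv hcy (f' := y')
    · intro x hx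
      rw [hinter] at hx ⊢
      exact ((hdy x (Set.Ioo_subset_Ico_self hx)).hasDerivAt (hnhds x hx)).hasDerivWithinAt
    · intro x hx
      rw [hinter] at hx
      have := hy'le x (Set.Ioo_subset_Ico_self hx); linarith
  have hyle : ∀ t ∈ Set.Ico (0:ℝ) T, y t ≤ -1 := by
    intro t htm
    have := hanti h0mem htm htm.1
    rwa [hy0] at this
  -- generic constancy principle on Ico 0 T
  have hconst : ∀ E : ℝ → ℝ, (∀ t ∈ Set.Ico (0:ℝ) T, HasDerivWithinAt E 0 (Set.Ico (0:ℝ) T) t) →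
      ∀ t ∈ Set.Ico (0:ℝ) T, E t = E 0 := by
    intro E hE t htm
    rcases eq_or_lt_of_le htm.1 with h | h
    · rw [← h]
    · have hcE : ContinuousOn E (Set.Ico (0:ℝ) T) := fun x hx => (hE x hx).continuousWithinAt
      have key : ∀ x ∈ Set.Icc (0:ℝ) t, E x = E 0 := by
        apply constant_of_has_deriv_right_zero
          (hcE.mono (Set.Icc_subset_Ico_right htm.2))
        intro x hx
        have hxm : x ∈ Set.Ico (0:ℝ) T := ⟨hx.1, lt_trans hx.2 htm.2⟩
        apply (hE x hxm).mono_of_mem_nhdsWithin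
        apply Filter.mem_of_superset
          (Ico_mem_nhdsGE_of_mem (⟨le_rfl, hxm.2⟩ : x ∈ Set.Ico x T))
        exact Set.Ico_subset_Ico_left hx.1
      exact key t ⟨htm.1, le_rfl⟩
  -- energy conservation
  have hW : ∀ t ∈ Set.Ico (0:ℝ) T, (y' t)^2 = Wf f (y t) := by
    have hE : ∀ t ∈ Set.Ico (0:ℝ) T,
        HasDerivWithinAt (fun u => (y' u)^2 + 2 * f (y u)) 0 (Set.Ico (0:ℝ) T) t := by
      intro t htm
      have h1 : HasDerivWithinAt (fun u => (y' u)^2)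
          ((2:ℕ) * (y' t)^1 * (-(deriv f (y t)))) (Set.Ico (0:ℝ) T) t := (hdy' t htm).pow 2
      have h2 : HasDerivWithinAt (fun u => f (y u)) (deriv f (y t) * y' t) (Set.Ico (0:ℝ) T) t :=
        (((hf.differentiable (by simp)) (y t)).hasDerivAt).comp_hasDerivWithinAt t (hdy t htm)
      have h3 := h1.add (h2.const_mul 2)
      refine h3.congr_deriv (Eq.symm ?_)
      push_cast
      ring
    intro t htm
    have := hconst _ hE t htm
    rw [hy0, hy'0] at this
    unfold Wf
    nlinarith [this]
  -- y' = -sqrt (W (y t))  (not needed separately) ; Mif (y t) = -t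
  intro t htm
  refine ⟨hyle t htm, ?_⟩
  have hF : ∀ t ∈ Set.Ico (0:ℝ) T,
      HasDerivWithinAt (fun u => Mif f (y u) + u) 0 (Set.Ico (0:ℝ) T) t := by
    intro t htm
    have h1 : HasDerivWithinAt (fun u => Mif f (y u)) (phif f (y t) * y' t) (Set.Ico (0:ℝ) T) t :=
      (hasDerivAt_Mif hf (y t)).comp_hasDerivWithinAt t (hdy t htm)
    have h2 := h1.add (hasDerivWithinAt_id t (Set.Ico (0:ℝ) T))
    refine h2.congr_deriv (Eq.symm ?_)
    have hWt := hW t htm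
    have hyt := hyle t htm
    have hW1 : 1 ≤ Wf f (y t) := Wf_ge_one hpos hyt
    have hy't : y' t = -Real.sqrt (Wf f (y t)) := by
      rw [← hWt, Real.sqrt_sq_eq_abs, abs_of_neg (by have := hy'le t htm; linarith : y' t < 0)]
      ring
    rw [phif_eq hpos hyt, hy't]
    have hne : Real.sqrt (Wf f (y t)) ≠ 0 := ne_of_gt (Real.sqrt_pos.2 (by linarith))
    field_simp
    ring
  have := hconst _ hF t htm
  rw [hy0, Mif_neg1] at this
  linarith [this]
end

/-- Ricci explosion for `M_f` when `f' > 0` grows superlinearly at `-∞`: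
the maximal solution of `y'' = -f'(y)`, `y(0) = -1`, `y'(0) = -1` has
`T < ∞` (there is no global solution), `y(t) → -∞` as `t → T`, and
`|f''(y(t))| = |ρ(γ̇,γ̇)(t)|` is unbounded on `[0,T)`. -/
theorem Mf_superlinear_Ricci_explodes (f : ℝ → ℝ) (hf : ContDiff ℝ (⊤ : ℕ∞) f)
    (hpos : ∀ u : ℝ, 0 < deriv f u) (ε δ : ℝ) (hε : 0 < ε) (hδ : 0 < δ)
    (hsup : ∀ u : ℝ, u ≤ -1 → ε * |u| ^ (1 + δ) ≤ deriv f u) :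
    (¬ ∃ y y' : ℝ → ℝ, SolOnIci (fun u => -deriv f u) y y' ∧
      y 0 = -1 ∧ y' 0 = -1) ∧
    (∀ T : ℝ, 0 < T → ∀ y y' : ℝ → ℝ, SolOnIco (fun u => -deriv f u) T y y' →
      y 0 = -1 → y' 0 = -1 →
      (¬ ∃ T' : ℝ, T < T' ∧ ∃ z z' : ℝ → ℝ,
        SolOnIco (fun u => -deriv f u) T' z z' ∧
        Set.EqOn z y (Set.Ico (0:ℝ) T)) →
      Tendsto y (𝓝[<] T) atBot ∧
        ∀ M : ℝ, ∃ t ∈ Set.Ico (0:ℝ) T, M < |deriv (deriv f) (y t)|) := by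
  constructor
  · rintro ⟨y, y', ⟨hdy, hdy'⟩, hy0, hy'0⟩
    have hB := Bf_pos hf hpos hε hδ hsup
    have hsol' : SolOnIco (fun u => -deriv f u) (Bf f + 1) y y' := by
      constructor
      · intro t htm
        exact (hdy t htm.1).mono Set.Ico_subset_Ici_self
      · intro t htm
        exact (hdy' t htm.1).mono Set.Ico_subset_Ici_self
    have hfacts := sol_facts hf hpos (by linarith) hsol' hy0 hy'0
    obtain ⟨hle, hM⟩ := hfacts (Bf f) ⟨hB.le, by linarith⟩
    have h2 := Bf_lt hf hpos hε hδ hsup hle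
    rw [hM] at h2
    simp at h2
  · intro T hT y y' hsol hy0 hy'0 hmax
    have hfacts := sol_facts hf hpos hT hsol hy0 hy'0
    have hTleB : T ≤ Bf f := by
      by_contra hcon
      push_neg at hcon
      have hBpos := Bf_pos hf hpos hε hδ hsup
      obtain ⟨hle, hM⟩ := hfacts (Bf f) ⟨hBpos.le, hcon⟩
      have h2 := Bf_lt hf hpos hε hδ hsup hle
      rw [hM] at h2
      simp at h2
    have hTB : T = Bf f := by
      rcases eq_or_lt_of_le hTleB with h | h
      · exact h
      · exfalso
        apply hmax
        refine ⟨(T + Bf f)/2, by linarith, yhat f,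
          (fun t => -Real.sqrt (Wf f (yhat f t))), ⟨?_, ?_⟩, ?_⟩
        · intro t htm
          exact (yhat_deriv1 hf hpos hε hδ hsup htm.1
            (by linarith [htm.2] : t < Bf f)).hasDerivWithinAt
        · intro t htm
          exact (yhat_deriv2 hf hpos hε hδ hsup htm.1
            (by linarith [htm.2] : t < Bf f)).hasDerivWithinAt
        · intro t htm
          have h1 := (hfacts t htm).2
          have h2 := yhat_spec hf hpos hε hδ hsup (lt_of_lt_of_le htm.2 hTleB)
          exact (Mif_strictMono hf).injective (h2.trans h1.symm)
    have htendsto : Tendsto y (𝓝[<] T) atBot := by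
      rw [tendsto_atBot]
      intro c
      set c' := min c (-1) - 1 with hc'
      have hc'le : c' ≤ -1 := by
        have := min_le_right c (-1); simp only [hc']; linarith
      have hc'c : c' ≤ c := by have := min_le_left c (-1); simp only [hc']; linarith
      have ht₀B : -(Mif f c') < Bf f := Bf_lt hf hpos hε hδ hsup hc'le
      have ht₀0 : 0 ≤ -(Mif f c') := by
        have h3 : Mif f c' ≤ Mif f (-1) := (Mif_strictMono hf).monotone hc'le
        rw [Mif_neg1] at h3; linarith
      have ht₀T : -(Mif f c') < T := by rw [hTB]; exact ht₀B
      filter_upwards [Ioo_mem_nhdsLT_of_mem (⟨ht₀T, le_rfl⟩ : T ∈ Set.Ioc (-(Mif f c')) T)]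
        with t ht
      have htm : t ∈ Set.Ico (0:ℝ) T := ⟨le_trans ht₀0 ht.1.le, ht.2⟩
      obtain ⟨hyle, hMy⟩ := hfacts t htm
      have hlt : Mif f (y t) < Mif f c' := by rw [hMy]; linarith [ht.1]
      have := (Mif_strictMono hf).lt_iff_lt.mp hlt
      linarith
    refine ⟨htendsto, ?_⟩
    intro M
    obtain ⟨u, hu1, hu2⟩ := f2nd_unbdd hf hpos hε hδ hsup M
    have hev : ∀ᶠ t in 𝓝[<] T, y t ≤ u ∧ t ∈ Set.Ioo (T/2) T := by
      apply Filter.Eventually.and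
      · exact htendsto.eventually (eventually_le_atBot u)
      · exact Ioo_mem_nhdsLT_of_mem ⟨by linarith, le_rfl⟩
    obtain ⟨t₁, hyt₁, ht₁⟩ := hev.exists
    have hcy : ContinuousOn y (Set.Icc 0 t₁) := by
      intro x hx
      exact ((hsol.1 x ⟨hx.1, lt_of_le_of_lt hx.2 ht₁.2⟩).continuousWithinAt).mono
        (fun z hz => ⟨hz.1, lt_of_le_of_lt hz.2 ht₁.2⟩)
    have hmem : u ∈ Set.Icc (y t₁) (y 0) := ⟨hyt₁, by rw [hy0]; exact hu1⟩
    obtain ⟨t₂, ht₂, hyt₂⟩ := intermediate_value_Icc'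
      (by linarith [ht₁.1, hT] : (0:ℝ) ≤ t₁) hcy hmem
    exact ⟨t₂, ⟨ht₂.1, lt_of_le_of_lt ht₂.2 ht₁.2⟩, by rw [hyt₂]; exact hu2⟩
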